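/- arXiv:2304.15000 — 4 statements merged into one kernel-verified Lean document; each statement's English description precedes it below -/
import Mathlib

section
/- Let S be a finite type and T : S → S an injective function (hence a bijection, since S is finite). Then (S, T) admits a quantum embedding: taking L = PUnit, η₀ = e_{PUnit.unit}, and U the unitary operator on EuclideanSpace ℂ (S × PUnit) induced by the permutation (s, u) ↦ (T s, u), for every ψ : H_S there exists η' : H_L of norm 1 with U (ψ ⊗ η₀) = (𝒯 ψ) ⊗ η'. -/
noncomputable section

/-- The tensor product of `ψ : H_S` and `η : H_L`, identified with a vector in
`EuclideanSpace ℂ (S × L)`. -/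
def tensor {S L : Type*} [Fintype S] [Fintype L]
    (ψ : EuclideanSpace ℂ S) (η : EuclideanSpace ℂ L) :
    EuclideanSpace ℂ (S × L) :=
  WithLp.toLp 2 (fun p : S × L => ψ p.1 * η p.2)

/-- The standard basis vector at `s` (indicator function of `s`). -/
def e {S : Type*} [Fintype S] [DecidableEq S] (s : S) : EuclideanSpace ℂ S :=
  EuclideanSpace.single s 1

/-- The linearization of `T : S → S`: the unique linear map with `𝒯 e_s = e_{T s}`. -/
def linearize {S : Type*} [Fintype S] [DecidableEq S] (T : S → S) :
    EuclideanSpace ℂ S →ₗ[ℂ] EuclideanSpace ℂ S where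
  toFun ψ := ∑ s : S, ψ s • e (T s)
  map_add' ψ φ := by
    simp [PiLp.add_apply, add_smul, Finset.sum_add_distrib]
  map_smul' c ψ := by
    simp [PiLp.smul_apply, smul_smul, Finset.smul_sum]

/-- If `T` is injective, then `(S, T)` admits a quantum embedding with `L = PUnit`,
`η₀ = e_{PUnit.unit}`, and `U` the unitary induced by the permutation `(s, u) ↦ (T s, u)`. -/
theorem injective_admits_quantum_embedding {S : Type} [Fintype S] [DecidableEq S]
    (T : S → S) (hT : Function.Injective T) :
    ∃ U : EuclideanSpace ℂ (S × PUnit) ≃ₗᵢ[ℂ] EuclideanSpace ℂ (S × PUnit),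
      (∀ p : S × PUnit, U (e p) = e (T p.1, p.2)) ∧
      ∀ ψ : EuclideanSpace ℂ S, ∃ η' : EuclideanSpace ℂ PUnit,
        ‖η'‖ = 1 ∧ U (tensor ψ (e PUnit.unit)) = tensor (linearize T ψ) η' := by
  have hb : Function.Bijective T := Finite.injective_iff_bijective.mp hT
  set τ : S ≃ S := Equiv.ofBijective T hb with hτ
  have hτ_apply : ∀ s, τ s = T s := fun s => rfl
  set σ : S × PUnit ≃ S × PUnit := τ.prodCongr (Equiv.refl PUnit) with hσ
  set U := LinearIsometryEquiv.piLpCongrLeft 2 ℂ ℂ σ with hU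
  have hUapp : ∀ (v : EuclideanSpace ℂ (S × PUnit)) (q : S × PUnit),
      U v q = v (σ.symm q) := by
    intro v q
    rfl
  refine ⟨U, ?_, ?_⟩
  · intro p
    ext q
    rw [hUapp]
    simp only [e, EuclideanSpace.single_apply]
    have : σ.symm q = p ↔ q = (T p.1, p.2) := by
      rw [Equiv.symm_apply_eq]
      constructor
      · rintro rfl; rfl
      · intro h; rw [h]; rfl
    by_cases h : σ.symm q = p
    · rw [if_pos h, if_pos (this.mp h)]
    · rw [if_neg h, if_neg (fun hh => h (this.mpr hh))]
  · intro ψ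
    refine ⟨e PUnit.unit, ?_, ?_⟩
    · simp [e, EuclideanSpace.norm_single]
    · ext q
      rw [hUapp]
      have hone : ∀ u : PUnit, e PUnit.unit u = 1 := by
        intro u
        simp [e, EuclideanSpace.single_apply]
      show ψ (σ.symm q).1 * e PUnit.unit (σ.symm q).2
        = linearize T ψ q.1 * e PUnit.unit q.2
      rw [hone, mul_one, mul_one]
      have hσs : (σ.symm q).1 = τ.symm q.1 := rfl
      rw [hσs]
      simp only [linearize, LinearMap.coe_mk, AddHom.coe_mk]
      rw [WithLp.ofLp_sum, Finset.sum_apply]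
      have : ∀ s : S, (ψ s • e (T s)) q.1 = if s = τ.symm q.1 then ψ s else 0 := by
        intro s
        simp only [PiLp.smul_apply, e, EuclideanSpace.single_apply, smul_eq_mul]
        by_cases h : s = τ.symm q.1
        · subst h
          rw [if_pos rfl, if_pos, mul_one]
          rw [← hτ_apply, Equiv.apply_symm_apply]
        · rw [if_neg, if_neg h, mul_zero]
          intro hh
          have hs : τ.symm q.1 = s := by
            rw [hh, ← hτ_apply, Equiv.symm_apply_apply]
          exact h hs.symm
      rw [Finset.sum_congr rfl (fun s _ => this s), Finset.sum_ite_eq' Finset.univ]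
      simp
end
end

section
/- (Soundness.) Suppose the transition system is synchronized at (κ₀, t), with witnessing final control state κ' : H_C of norm 1. Then the induced mapping from input data to output data is a unitary operator: there exists a unitary operator V on EuclideanSpace ℂ D such that 𝒯^t (κ₀ ⊗ δ₀) = κ' ⊗ (V δ₀) for every δ₀ : H_D. In particular, for every input data state the final state is separable from the control state. -/
noncomputable section

lemma norm_tensor {S L : Type*} [Fintype S] [Fintype L]
    (ψ : EuclideanSpace ℂ S) (η : EuclideanSpace ℂ L) :
    ‖tensor ψ η‖ = ‖ψ‖ * ‖η‖ := by
  rw [EuclideanSpace.norm_eq, EuclideanSpace.norm_eq, EuclideanSpace.norm_eq,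
    ← Real.sqrt_mul (by positivity), Finset.sum_mul_sum]
  congr 1
  rw [Fintype.sum_prod_type]
  exact Finset.sum_congr rfl fun s _ => Finset.sum_congr rfl fun l _ => by
    simp [tensor, norm_mul, mul_pow]

lemma tensor_add {S L : Type*} [Fintype S] [Fintype L]
    (ψ : EuclideanSpace ℂ S) (η₁ η₂ : EuclideanSpace ℂ L) :
    tensor ψ (η₁ + η₂) = tensor ψ η₁ + tensor ψ η₂ := by
  ext p; simp [tensor, PiLp.add_apply, mul_add]

lemma tensor_smul {S L : Type*} [Fintype S] [Fintype L]
    (c : ℂ) (ψ : EuclideanSpace ℂ S) (η : EuclideanSpace ℂ L) :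
    tensor ψ (c • η) = c • tensor ψ η := by
  ext p; simp [tensor, PiLp.smul_apply, smul_eq_mul]; ring

/-- **Soundness.** If the transition system is synchronized at `(κ₀, t)` with witnessing final
control state `κ'` of norm 1, then the induced mapping from input data to output data is a
unitary operator, and every final state is separable from the control state. -/
theorem soundness {C D : Type} [Fintype C] [DecidableEq C] [Fintype D] [DecidableEq D]
    (T : (C × D) ≃ (C × D))
    (𝒯 : EuclideanSpace ℂ (C × D) ≃ₗᵢ[ℂ] EuclideanSpace ℂ (C × D))
    (h𝒯 : ∀ p : C × D, 𝒯 (e p) = e (T p))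
    (κ₀ : EuclideanSpace ℂ C) (hκ₀ : ‖κ₀‖ = 1) (t : ℕ)
    (κ' : EuclideanSpace ℂ C) (hκ' : ‖κ'‖ = 1)
    (hsync : ∀ δ₀ : EuclideanSpace ℂ D, ∃ δ' : EuclideanSpace ℂ D,
      (𝒯 ^ t) (tensor κ₀ δ₀) = tensor κ' δ') :
    ∃ V : EuclideanSpace ℂ D ≃ₗᵢ[ℂ] EuclideanSpace ℂ D,
      ∀ δ₀ : EuclideanSpace ℂ D, (𝒯 ^ t) (tensor κ₀ δ₀) = tensor κ' (V δ₀) := by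
  have hκ'ne : κ' ≠ 0 := by
    intro h; rw [h] at hκ'; simp at hκ'
  obtain ⟨c₀, hc₀⟩ : ∃ c, κ' c ≠ 0 := by
    by_contra h; push_neg at h
    exact hκ'ne (PiLp.ext fun c => by simp [h c])
  set U := (𝒯 ^ t) with hU
  let L : EuclideanSpace ℂ D →ₗ[ℂ] EuclideanSpace ℂ D :=
    { toFun := fun δ₀ => (WithLp.toLp 2 (fun d => (U (tensor κ₀ δ₀)) (c₀, d) / κ' c₀) :
        EuclideanSpace ℂ D)
      map_add' := fun x y => by
        ext d
        simp only [tensor_add, map_add, PiLp.add_apply, add_div, PiLp.toLp_apply]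
      map_smul' := fun c x => by
        ext d
        simp only [tensor_smul, map_smul, PiLp.smul_apply, smul_eq_mul, RingHom.id_apply, PiLp.toLp_apply,
          mul_div_assoc] }
  have hL : ∀ δ₀, U (tensor κ₀ δ₀) = tensor κ' (L δ₀) := by
    intro δ₀
    obtain ⟨δ', hδ'⟩ := hsync δ₀
    rw [hδ']
    have : L δ₀ = δ' := by
      ext d
      show (U (tensor κ₀ δ₀)) (c₀, d) / κ' c₀ = δ' d
      rw [hδ']
      show κ' c₀ * δ' d / κ' c₀ = δ' d
      field_simp
    rw [this]
  have hLnorm : ∀ δ₀, ‖L δ₀‖ = ‖δ₀‖ := by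
    intro δ₀
    have h1 : ‖tensor κ' (L δ₀)‖ = ‖tensor κ₀ δ₀‖ := by
      rw [← hL δ₀]; exact U.norm_map _
    rw [norm_tensor, norm_tensor, hκ₀, hκ'] at h1
    simpa using h1
  let Li : EuclideanSpace ℂ D →ₗᵢ[ℂ] EuclideanSpace ℂ D := ⟨L, hLnorm⟩
  refine ⟨Li.toLinearIsometryEquiv rfl, fun δ₀ => ?_⟩
  rw [hL δ₀]
  rw [Li.coe_toLinearIsometryEquiv]
  rfl
end
end

section
/- (Completeness.) Let C and D be finite types, T : C × D ≃ C × D a bijective state transition with unitary linearization 𝒯, κ₀ : H_C with ‖κ₀‖ = 1, and t : ℕ. Suppose there exist δ_A, δ_B : H_D of norm 1, κ_A, κ_B : H_C, and δ'_A, δ'_B : H_D with 𝒯^t (κ₀ ⊗ δ_A) = κ_A ⊗ δ'_A, 𝒯^t (κ₀ ⊗ δ_B) = κ_B ⊗ δ'_B, and with κ_A and κ_B linearly independent over ℂ. Then 𝒯^t (κ₀ ⊗ (1/√2)·(δ_A + δ_B)) = (1/√2)·(κ_A ⊗ δ'_A + κ_B ⊗ δ'_B), and either δ'_A and δ'_B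 are linearly dependent over ℂ (so the data mapping is not injective up to scalars), or this final state is entangled: it is not equal to ψ ⊗ φ for any ψ : H_C and φ : H_D. -/
noncomputable section

/-- **Completeness.** If two norm-1 data inputs lead to final states with linearly independent
control components, then on their equal superposition the machine produces a final state that is
either entangled, or else the data mapping is not injective up to scalars. -/
theorem completeness {C D : Type} [Fintype C] [DecidableEq C] [Fintype D] [DecidableEq D]
    (T : (C × D) ≃ (C × D))
    (𝒯 : EuclideanSpace ℂ (C × D) ≃ₗᵢ[ℂ] EuclideanSpace ℂ (C × D))
    (h𝒯 : ∀ p : C × D, 𝒯 (e p) = e (T p))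
    (κ₀ : EuclideanSpace ℂ C) (hκ₀ : ‖κ₀‖ = 1) (t : ℕ)
    (δA δB : EuclideanSpace ℂ D) (hδA : ‖δA‖ = 1) (hδB : ‖δB‖ = 1)
    (κA κB : EuclideanSpace ℂ C) (δA' δB' : EuclideanSpace ℂ D)
    (hA : (𝒯 ^ t) (tensor κ₀ δA) = tensor κA δA')
    (hB : (𝒯 ^ t) (tensor κ₀ δB) = tensor κB δB')
    (hκ : LinearIndependent ℂ ![κA, κB]) :
    (𝒯 ^ t) (tensor κ₀ ((((Real.sqrt 2 : ℝ) : ℂ))⁻¹ • (δA + δB))) =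
      (((Real.sqrt 2 : ℝ) : ℂ))⁻¹ • (tensor κA δA' + tensor κB δB') ∧
    (¬ LinearIndependent ℂ ![δA', δB'] ∨
      ¬ ∃ (ψ : EuclideanSpace ℂ C) (φ : EuclideanSpace ℂ D),
        (((Real.sqrt 2 : ℝ) : ℂ))⁻¹ • (tensor κA δA' + tensor κB δB') = tensor ψ φ) := by
  have ha0 : (((Real.sqrt 2 : ℝ) : ℂ))⁻¹ ≠ 0 := by
    have : Real.sqrt 2 ≠ 0 := by positivity
    simpa using this
  set a : ℂ := (((Real.sqrt 2 : ℝ) : ℂ))⁻¹ with ha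
  constructor
  · have h1 : tensor κ₀ (a • (δA + δB)) = a • (tensor κ₀ δA + tensor κ₀ δB) := by
      ext p
      simp only [tensor, PiLp.toLp_apply, PiLp.smul_apply, PiLp.add_apply, smul_eq_mul]
      ring
    rw [h1, map_smul, map_add, hA, hB]
  · by_cases hd : LinearIndependent ℂ ![δA', δB']
    · right
      rintro ⟨ψ, φ, hψφ⟩
      have hpt : ∀ c d, a * (κA c * δA' d + κB c * δB' d) = ψ c * φ d := by
        intro c d
        have := congrArg (fun v : EuclideanSpace ℂ (C × D) => v (c, d)) hψφ
        simpa [tensor, PiLp.toLp_apply, PiLp.smul_apply, PiLp.add_apply, smul_eq_mul, mul_add] using this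
      -- κA ≠ 0
      have hκA : κA ≠ 0 := by
        have := hκ.ne_zero 0
        simpa using this
      obtain ⟨c₁, hc₁⟩ : ∃ c, κA c ≠ 0 := by
        by_contra h
        push_neg at h
        exact hκA (PiLp.ext h)
      obtain ⟨c₂, hc₂⟩ : ∃ c, κA c₁ * κB c - κB c₁ * κA c ≠ 0 := by
        by_contra h
        push_neg at h
        have hrel : κB c₁ • κA + (-(κA c₁)) • κB = 0 := by
          ext c
          have := h c
          simp only [PiLp.add_apply, PiLp.smul_apply, PiLp.zero_apply, smul_eq_mul]
          linear_combination -this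
        have := (LinearIndependent.pair_iff.mp ?hk (κB c₁) (-(κA c₁)) hrel).2
        · exact hc₁ (by simpa using neg_eq_zero.mp this)
        case hk => simpa using hκ
      set Dt : ℂ := κA c₁ * κB c₂ - κB c₁ * κA c₂ with hDt
      set sA : ℂ := (ψ c₁ * κB c₂ - ψ c₂ * κB c₁) / (a * Dt) with hsA
      set sB : ℂ := (ψ c₂ * κA c₁ - ψ c₁ * κA c₂) / (a * Dt) with hsB
      have hDt0 : a * Dt ≠ 0 := mul_ne_zero ha0 hc₂
      have hAeq : ∀ d, δA' d = sA * φ d := by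
        intro d
        rw [hsA, div_mul_eq_mul_div, eq_div_iff hDt0]
        have h1 := hpt c₁ d
        have h2 := hpt c₂ d
        rw [hDt]
        ring_nf
        linear_combination (κB c₂ * h1 - κB c₁ * h2)
      have hBeq : ∀ d, δB' d = sB * φ d := by
        intro d
        rw [hsB, div_mul_eq_mul_div, eq_div_iff hDt0]
        have h1 := hpt c₁ d
        have h2 := hpt c₂ d
        rw [hDt]
        ring_nf
        linear_combination (κA c₁ * h2 - κA c₂ * h1)
      have hrel : sB • δA' + (-sA) • δB' = 0 := by
        ext d
        simp only [PiLp.add_apply, PiLp.smul_apply, PiLp.zero_apply, smul_eq_mul,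
          hAeq d, hBeq d]
        ring
      have hz := LinearIndependent.pair_iff.mp (by simpa using hd) sB (-sA) hrel
      have hsA0 : sA = 0 := by simpa using hz.2
      have hδA'0 : δA' = 0 := PiLp.ext fun d => by rw [hAeq d, hsA0, zero_mul]; rfl
      have := hd.ne_zero 0
      simp [hδA'0] at this
    · left; exact hd
end
end

section
/- (Disruptive entanglement in classical embeddings.) Let S and L be finite types, U a unitary operator on EuclideanSpace ℂ (S × L), η₀ : H_L with ‖η₀‖ = 1, and T : S → S. Let s₁, s₂ : S with T s₁ ≠ T s₂, and let η₁, η₂ : H_L satisfy U (e_{s₁} ⊗ η₀) = e_{T s₁} ⊗ η₁ and U (e_{s₂} ⊗ η₀) = e_{T s₂} ⊗ η₂. If η₁ and η₂ are linearly independent over ℂ, then U ((1/√2)·(e_{s₁} + e_{s₂}) ⊗ η₀) = (1/√2)·(e_{T s₁} ⊗ η₁ + e_{T s₂} ⊗ η₂), and this state is entangled: it is not equal to ψ ⊗ φ for any ψ : H_S and φ : H_L. -/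
noncomputable section

/-- **Disruptive entanglement in classical embeddings.** If `U` maps `e_{s₁} ⊗ η₀` and
`e_{s₂} ⊗ η₀` to `e_{T s₁} ⊗ η₁` and `e_{T s₂} ⊗ η₂` with `T s₁ ≠ T s₂` and `η₁, η₂`
linearly independent, then on the superposition input the output state is entangled. -/
theorem disruptive_entanglement {S L : Type} [Fintype S] [DecidableEq S] [Fintype L]
    (U : EuclideanSpace ℂ (S × L) ≃ₗᵢ[ℂ] EuclideanSpace ℂ (S × L))
    (η₀ : EuclideanSpace ℂ L) (hη₀ : ‖η₀‖ = 1)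
    (T : S → S) (s₁ s₂ : S) (hne : T s₁ ≠ T s₂)
    (η₁ η₂ : EuclideanSpace ℂ L)
    (h₁ : U (tensor (e s₁) η₀) = tensor (e (T s₁)) η₁)
    (h₂ : U (tensor (e s₂) η₀) = tensor (e (T s₂)) η₂)
    (hind : LinearIndependent ℂ ![η₁, η₂]) :
    U (tensor ((((Real.sqrt 2 : ℝ) : ℂ))⁻¹ • (e s₁ + e s₂)) η₀) =
      (((Real.sqrt 2 : ℝ) : ℂ))⁻¹ • (tensor (e (T s₁)) η₁ + tensor (e (T s₂)) η₂) ∧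
    ¬ ∃ (ψ : EuclideanSpace ℂ S) (φ : EuclideanSpace ℂ L),
      (((Real.sqrt 2 : ℝ) : ℂ))⁻¹ • (tensor (e (T s₁)) η₁ + tensor (e (T s₂)) η₂) =
        tensor ψ φ := by
  have hc : (((Real.sqrt 2 : ℝ) : ℂ)) ≠ 0 := by
    simp [Complex.ext_iff, Real.sqrt_eq_zero']
  have htens : tensor ((((Real.sqrt 2 : ℝ) : ℂ))⁻¹ • (e s₁ + e s₂)) η₀ =
      (((Real.sqrt 2 : ℝ) : ℂ))⁻¹ • (tensor (e s₁) η₀ + tensor (e s₂) η₀) := by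
    ext p
    simp [tensor, PiLp.add_apply, PiLp.smul_apply, smul_eq_mul]
    ring
  constructor
  · rw [htens, map_smul, map_add, h₁, h₂]
  · rintro ⟨ψ, φ, h⟩
    have key : ∀ s : S, ∀ l : L,
        (((Real.sqrt 2 : ℝ) : ℂ))⁻¹ * ((e (T s₁) : EuclideanSpace ℂ S) s * η₁ l
          + (e (T s₂) : EuclideanSpace ℂ S) s * η₂ l) = ψ s * φ l := by
      intro s l
      have := congrArg (fun v : EuclideanSpace ℂ (S × L) => v (s, l)) h
      simpa [tensor, PiLp.smul_apply, PiLp.add_apply, smul_eq_mul, mul_add] using this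
    have h1 : ∀ l, (((Real.sqrt 2 : ℝ) : ℂ))⁻¹ * η₁ l = ψ (T s₁) * φ l := by
      intro l
      have := key (T s₁) l
      simpa [e, EuclideanSpace.single_apply, if_neg hne] using this
    have h2 : ∀ l, (((Real.sqrt 2 : ℝ) : ℂ))⁻¹ * η₂ l = ψ (T s₂) * φ l := by
      intro l
      have := key (T s₂) l
      simpa [e, EuclideanSpace.single_apply, if_neg hne.symm] using this
    have hη1 : η₁ = (((Real.sqrt 2 : ℝ) : ℂ) * ψ (T s₁)) • φ := by
      ext l
      have := h1 l
      field_simp at this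
      rw [PiLp.smul_apply, smul_eq_mul]
      linear_combination this
    have hη2 : η₂ = (((Real.sqrt 2 : ℝ) : ℂ) * ψ (T s₂)) • φ := by
      ext l
      have := h2 l
      field_simp at this
      rw [PiLp.smul_apply, smul_eq_mul]
      linear_combination this
    rw [linearIndependent_fin2] at hind
    obtain ⟨hη₂ne, hnm⟩ := hind
    have hb : ((Real.sqrt 2 : ℝ) : ℂ) * ψ (T s₂) ≠ 0 := by
      intro hb0
      exact hη₂ne (by simp [hη2, hb0])
    apply hnm ((((Real.sqrt 2 : ℝ) : ℂ) * ψ (T s₁)) / (((Real.sqrt 2 : ℝ) : ℂ) * ψ (T s₂)))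
    simp only [hη1, hη2, Matrix.cons_val_one, Matrix.head_cons, Matrix.cons_val_zero,
      smul_smul, div_mul_cancel₀ _ hb]
end
end
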